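/- Every ground normal ASP program without constraints (every rule has exactly one head atom) that is stratified has exactly one stable model. -/

import Mathlib

/- A formalization of Answer Set Programming (ASP):
   non-ground programs, grounding, interpretations, stable models,
   dependency graphs, stratification, compilable subprograms,
   and splitting sets for ground programs. -/

namespace ASP

/-- A term is a variable or a constant. -/
inductive Term where
  | var : ℕ → Term
  | const : ℕ → Term

/-- A (non-ground) atom `p(t1,...,tk)`. -/
structure Atom where
  pred : ℕ
  args : List Term

/-- A literal: an atom or a negated atom. -/
inductive Lit where
  | pos : Atom → Lit
  | neg : Atom → Lit

/-- A rule `h1 | ... | hn :- b1, ..., bm`. -/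
structure Rule where
  head : List Atom
  body : List Lit

/-- An ASP program is a set of rules (finiteness is stated as a hypothesis). -/
abbrev Program := Set Rule

/-- A ground atom. -/
structure GAtom where
  pred : ℕ
  args : List ℕ

/-- A ground literal. -/
inductive GLit where
  | pos : GAtom → GLit
  | neg : GAtom → GLit

/-- A ground rule. -/
structure GRule where
  head : List GAtom
  body : List GLit

/-- A ground program. -/
abbrev GProgram := Set GRule

/-- The atom of a literal. -/
def Lit.atom : Lit → Atom
  | .pos a => a
  | .neg a => a

/-- The atom of a ground literal. -/
def GLit.atom : GLit → GAtom
  | .pos a => a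
  | .neg a => a

/-- Whether a ground literal is positive. -/
def GLit.isPos : GLit → Bool
  | .pos _ => true
  | .neg _ => false

/-- The atoms occurring in a rule (head or body). -/
def Rule.atoms (r : Rule) : Set Atom :=
  {a | a ∈ r.head ∨ ∃ l ∈ r.body, l.atom = a}

/-- The variables occurring in a rule. -/
def Rule.vars (r : Rule) : Set ℕ :=
  {v | ∃ a ∈ r.atoms, Term.var v ∈ a.args}

/-- The Herbrand universe of a program: the constants occurring in it. -/
def herbrandU (π : Program) : Set ℕ :=
  {c | ∃ r ∈ π, ∃ a ∈ r.atoms, Term.const c ∈ a.args}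

/-- The predicate symbols occurring in a program. -/
def preds (π : Program) : Set ℕ :=
  {p | ∃ r ∈ π, ∃ a ∈ r.atoms, a.pred = p}

/-- The predicate symbols occurring in heads of rules of a program. -/
def headPreds (π : Program) : Set ℕ :=
  {p | ∃ r ∈ π, ∃ a ∈ r.head, a.pred = p}

/-- The Herbrand base of a program: ground atoms built from predicate
    symbols of the program and constants of its Herbrand universe. -/
def herbrandB (π : Program) : Set GAtom :=
  {ga | ga.pred ∈ preds π ∧ ∀ c ∈ ga.args, c ∈ herbrandU π}

/-- Applying a substitution (from variables to constants) to a term. -/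
def Term.subst (σ : ℕ → ℕ) : Term → ℕ
  | .var v => σ v
  | .const c => c

/-- Applying a substitution to an atom. -/
def Atom.ground (σ : ℕ → ℕ) (a : Atom) : GAtom :=
  ⟨a.pred, a.args.map (Term.subst σ)⟩

/-- Applying a substitution to a literal. -/
def Lit.ground (σ : ℕ → ℕ) : Lit → GLit
  | .pos a => .pos (a.ground σ)
  | .neg a => .neg (a.ground σ)

/-- Applying a substitution to a rule. -/
def Rule.ground (σ : ℕ → ℕ) (r : Rule) : GRule :=
  ⟨r.head.map (Atom.ground σ), r.body.map (Lit.ground σ)⟩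

/-- `Ground(π)`: all ground instances of rules of `π`, substituting the
    variables by constants of the Herbrand universe of `π`. -/
def groundProg (π : Program) : GProgram :=
  {gr | ∃ r ∈ π, ∃ σ : ℕ → ℕ, (∀ v ∈ r.vars, σ v ∈ herbrandU π) ∧ gr = r.ground σ}

/-- `I⁺`: the set of atoms occurring positively in `I`. -/
def plus (I : Set GLit) : Set GAtom := {a | GLit.pos a ∈ I}

/-- An interpretation over a set `B` of ground atoms: a set of ground literals
    over `B` containing, for each `a ∈ B`, exactly one of `a` and `∼a`. -/
def IsInterp (B : Set GAtom) (I : Set GLit) : Prop :=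
  (∀ l ∈ I, l.atom ∈ B) ∧
  ∀ a ∈ B, (GLit.pos a ∈ I ∧ GLit.neg a ∉ I) ∨ (GLit.neg a ∈ I ∧ GLit.pos a ∉ I)

/-- `I` is a model of a ground program: whenever all body literals of a rule
    are true in `I`, some head atom is true in `I`. -/
def IsModelG (P : GProgram) (I : Set GLit) : Prop :=
  ∀ r ∈ P, (∀ l ∈ r.body, l ∈ I) → ∃ a ∈ r.head, GLit.pos a ∈ I

/-- The reduct `P^I`: delete rules containing a negative body literal `∼a`
    with `a ∈ I⁺`, and delete negative body literals from remaining rules. -/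
def reductG (P : GProgram) (I : Set GLit) : GProgram :=
  {r' | ∃ r ∈ P, (∀ a, GLit.neg a ∈ r.body → a ∉ plus I) ∧
        r' = ⟨r.head, r.body.filter GLit.isPos⟩}

/-- `I` is a stable model (answer set) of the non-ground program `π`. -/
def IsAnswerSet (π : Program) (I : Set GLit) : Prop :=
  IsInterp (herbrandB π) I ∧ IsModelG (groundProg π) I ∧
  ¬ ∃ J, IsInterp (herbrandB π) J ∧ IsModelG (reductG (groundProg π) I) J ∧
         plus J ⊂ plus I

/-- Positive edge of the dependency graph `DG_π`: from a predicate of a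
    positive body literal to a predicate of the head. -/
def posEdge (π : Program) (p q : ℕ) : Prop :=
  ∃ r ∈ π, (∃ a, Lit.pos a ∈ r.body ∧ a.pred = p) ∧ ∃ b ∈ r.head, b.pred = q

/-- Negative edge of the dependency graph `DG_π`: from a predicate of a
    negative body literal to a predicate of the head, or between (the
    predicates of) two distinct atom occurrences in a disjunctive head. -/
def negEdge (π : Program) (p q : ℕ) : Prop :=
  (∃ r ∈ π, (∃ a, Lit.neg a ∈ r.body ∧ a.pred = p) ∧ ∃ b ∈ r.head, b.pred = q) ∨
  (∃ r ∈ π, ∃ i j : Fin r.head.length, i ≠ j ∧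
      (r.head.get i).pred = p ∧ (r.head.get j).pred = q)

/-- Any edge of the dependency graph. -/
def edge (π : Program) (p q : ℕ) : Prop := posEdge π p q ∨ negEdge π p q

/-- `π` is stratified iff `DG_π` has no cycle containing a negative edge. -/
def Stratified (π : Program) : Prop :=
  ¬ ∃ p q, negEdge π p q ∧ Relation.ReflTransGen (edge π) q p

/-- `λ` is compilable w.r.t. `π`: `λ ⊆ π`, `λ` is stratified, and no predicate
    occurring in a head of `λ` occurs anywhere in `π ∖ λ`. -/
def Compilable (π lam : Program) : Prop :=
  lam ⊆ π ∧ Stratified lam ∧ ∀ p ∈ headPreds lam, p ∉ preds (π \ lam)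

/-- A ground atom viewed as a (non-ground) atom. -/
def GAtom.toAtom (a : GAtom) : Atom := ⟨a.pred, a.args.map Term.const⟩

/-- `{f. | f ∈ S}`: the program consisting of each atom of `S` as a fact. -/
def factsProg (S : Set GAtom) : Program :=
  {r | ∃ a ∈ S, r = ⟨[a.toAtom], []⟩}

/-- The atoms occurring in a ground rule (head or body). -/
def GRule.atoms (r : GRule) : Set GAtom :=
  {a | a ∈ r.head ∨ ∃ l ∈ r.body, l.atom = a}

/-- The Herbrand base of a ground program: the atoms occurring in it. -/
def gAtoms (P : GProgram) : Set GAtom :=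
  {a | ∃ r ∈ P, a ∈ r.atoms}

/-- `I` is a stable model of the ground program `P`. -/
def IsStableG (P : GProgram) (I : Set GLit) : Prop :=
  IsInterp (gAtoms P) I ∧ IsModelG P I ∧
  ¬ ∃ J, IsInterp (gAtoms P) J ∧ IsModelG (reductG P I) J ∧ plus J ⊂ plus I

/-- Positive edge of the dependency graph of a ground program. -/
def posEdgeG (P : GProgram) (p q : ℕ) : Prop :=
  ∃ r ∈ P, (∃ a, GLit.pos a ∈ r.body ∧ a.pred = p) ∧ ∃ b ∈ r.head, b.pred = q

/-- Negative edge of the dependency graph of a ground program. -/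
def negEdgeG (P : GProgram) (p q : ℕ) : Prop :=
  ∃ r ∈ P, (∃ a, GLit.neg a ∈ r.body ∧ a.pred = p) ∧ ∃ b ∈ r.head, b.pred = q

/-- A ground program is stratified iff its dependency graph has no cycle
    containing a negative edge. -/
def StratifiedG (P : GProgram) : Prop :=
  ¬ ∃ p q, negEdgeG P p q ∧
      Relation.ReflTransGen (fun x y => posEdgeG P x y ∨ negEdgeG P x y) q p

/-- `U` is a splitting set for `P`: every rule with a head atom in `U`
    has all of its atoms in `U`. -/
def splittingSet (P : GProgram) (U : Set GAtom) : Prop :=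
  ∀ r ∈ P, (∃ a ∈ r.head, a ∈ U) → ∀ a ∈ r.atoms, a ∈ U

/-- `b_U(P)`: the rules of `P` all of whose atoms are in `U`. -/
def bottomProg (P : GProgram) (U : Set GAtom) : GProgram :=
  {r | r ∈ P ∧ ∀ a ∈ r.atoms, a ∈ U}

open Classical in
/-- Remove from a list of ground literals those whose atom is in `U`. -/
noncomputable def removeU (U : Set GAtom) : List GLit → List GLit
  | [] => []
  | l :: ls => if l.atom ∈ U then removeU U ls else l :: removeU U ls

/-- `e_U(P, X)`: partial evaluation of `P` w.r.t. `U` and `X ⊆ U`: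
    delete every rule with a positive body literal over an atom of `U` not in
    `X`, or a negative body literal over an atom of `U` in `X`; delete all
    remaining body literals over atoms of `U` from the surviving rules. -/
def topEval (P : GProgram) (U X : Set GAtom) : GProgram :=
  {r' | ∃ r ∈ P,
    (∀ a, GLit.pos a ∈ r.body → a ∈ U → a ∈ X) ∧
    (∀ a, GLit.neg a ∈ r.body → a ∈ U → a ∉ X) ∧
    r' = ⟨r.head, removeU U r.body⟩}

end ASP

open ASP

/-!
Give every predicate a rank `ρ` that does not decrease along positive edges of the dependency
graph and strictly increases along negative ones; stratification and finiteness provide one.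
The Gelfond–Lifschitz operator `M ↦ least model of P^M`, whose fixed points are the stable
models, is then local: which atoms of rank `≤ n` it produces depends only on the atoms of
rank `< n` in `M`. Hence any two fixed points agree rank by rank, and iterating the operator
from `∅` as many times as there are ranks reaches a fixed point.
-/

open Function Relation

section RankLocal

variable {α : Type*} (ρ : α → ℕ)

def EqBelow (n : ℕ) (M M' : Set α) : Prop := ∀ a, ρ a < n → (a ∈ M ↔ a ∈ M')

def RankLocal (Γ : Set α → Set α) : Prop :=
  ∀ n M M', EqBelow ρ n M M' → EqBelow ρ (n + 1) (Γ M) (Γ M')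

variable {ρ}

lemma eqBelow_zero (M M' : Set α) : EqBelow ρ 0 M M' := fun _ ha => absurd ha (Nat.not_lt_zero _)

lemma EqBelow.symm {n : ℕ} {M M' : Set α} (h : EqBelow ρ n M M') : EqBelow ρ n M' M :=
  fun a ha => (h a ha).symm

variable {Γ : Set α → Set α}

lemma RankLocal.eqBelow_iterate (hΓ : RankLocal ρ Γ) (S : Set α) :
    ∀ n, EqBelow ρ n (Γ^[n] S) (Γ^[n + 1] S)
  | 0 => eqBelow_zero _ _
  | n + 1 => by
    rw [iterate_succ_apply', iterate_succ_apply' Γ (n + 1)]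
    exact hΓ _ _ _ (hΓ.eqBelow_iterate S n)

lemma RankLocal.isFixedPt_iterate (hΓ : RankLocal ρ Γ) {R : ℕ} (hR : ∀ a, ρ a < R)
    (S : Set α) : IsFixedPt Γ (Γ^[R] S) := by
  ext a
  rw [← iterate_succ_apply' Γ R S]
  exact (hΓ.eqBelow_iterate S R a (hR a)).symm

lemma RankLocal.eq_of_isFixedPt (hΓ : RankLocal ρ Γ) {M M' : Set α} (hM : IsFixedPt Γ M)
    (hM' : IsFixedPt Γ M') : M = M' := by
  have h : ∀ n, EqBelow ρ n M M' := by
    intro n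
    induction n with
    | zero => exact eqBelow_zero M M'
    | succ n ih =>
      have := hΓ n M M' ih
      rwa [hM.eq, hM'.eq] at this
  ext a
  exact h (ρ a + 1) a (Nat.lt_succ_self _)

end RankLocal

section Rank

variable {α : Type*} (E N : α → α → Prop)

def negAncestors (q : α) : Set α :=
  {x | ∃ a b, N a b ∧ ReflTransGen E x a ∧ ReflTransGen E b q}

variable {E N}

lemma negAncestors_subset_sources (hNE : ∀ p q, N p q → E p q) (q : α) :
    negAncestors E N q ⊆ {p | ∃ q, E p q} := by
  rintro x ⟨a, b, hab, hxa, -⟩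
  obtain ⟨y, hxy, -⟩ := TransGen.head'_iff.mp (TransGen.tail' hxa (hNE a b hab))
  exact ⟨y, hxy⟩

lemma negAncestors_mono {p q : α} (e : E p q) : negAncestors E N p ⊆ negAncestors E N q :=
  fun _ ⟨a, b, hab, hxa, hbp⟩ => ⟨a, b, hab, hxa, hbp.tail e⟩

/-- The rank of `q` is the number of points from which `q` can be reached through an `N`-edge. -/
lemma exists_rank_of_not_cycle (hNE : ∀ p q, N p q → E p q)
    (hcyc : ¬ ∃ p q, N p q ∧ ReflTransGen E q p) (hfin : {p | ∃ q, E p q}.Finite) :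
    ∃ ρ : α → ℕ, ∃ R, (∀ p, ρ p < R) ∧ (∀ p q, E p q → ρ p ≤ ρ q) ∧
      ∀ p q, N p q → ρ p < ρ q := by
  have hfin' (q : α) := hfin.subset (negAncestors_subset_sources hNE q)
  refine ⟨fun q => (negAncestors E N q).ncard, {p | ∃ q, E p q}.ncard + 1,
    fun q => Nat.lt_succ_of_le (Set.ncard_le_ncard (negAncestors_subset_sources hNE q) hfin),
    fun p q e => Set.ncard_le_ncard (negAncestors_mono e) (hfin' q),
    fun p q hpq => Set.ncard_lt_ncard ?_ (hfin' q)⟩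
  refine (Set.ssubset_iff_of_subset (negAncestors_mono (hNE p q hpq))).mpr
    ⟨p, ⟨p, q, hpq, .refl, .refl⟩, ?_⟩
  rintro ⟨a, b, hab, hpa, hbp⟩
  exact hcyc ⟨a, b, hab, hbp.trans hpa⟩

end Rank

lemma List.eq_of_mem_of_length_eq_one {α : Type*} {l : List α} (hl : l.length = 1) {a b : α}
    (ha : a ∈ l) (hb : b ∈ l) : a = b := by
  obtain ⟨c, rfl⟩ := List.length_eq_one_iff.mp hl
  rw [List.mem_singleton] at ha hb
  rw [ha, hb]

namespace ASP

variable {P : GProgram}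

lemma exists_rank_of_stratifiedG (hfin : P.Finite) (hstrat : StratifiedG P) :
    ∃ ρ : ℕ → ℕ, ∃ R, (∀ p, ρ p < R) ∧ (∀ p q, posEdgeG P p q → ρ p ≤ ρ q) ∧
      ∀ p q, negEdgeG P p q → ρ p < ρ q := by
  have hsources : {p | ∃ q, posEdgeG P p q ∨ negEdgeG P p q}.Finite := by
    refine (hfin.biUnion fun r _ => r.body.finite_toSet.image fun l => l.atom.pred).subset ?_
    rintro p ⟨q, ⟨r, hr, ⟨a, ha, rfl⟩, -⟩ | ⟨r, hr, ⟨a, ha, rfl⟩, -⟩⟩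
    exacts [Set.mem_biUnion hr ⟨_, ha, rfl⟩, Set.mem_biUnion hr ⟨_, ha, rfl⟩]
  obtain ⟨ρ, R, hR, hE, hN⟩ :=
    exists_rank_of_not_cycle (fun p q => Or.inr) hstrat hsources
  exact ⟨ρ, R, hR, fun p q h => hE p q (Or.inl h), hN⟩

/-- The immediate-consequence operator of the reduct `P^I`, where `M = I⁺`. -/
def reductConseq (P : GProgram) (M : Set GAtom) : Set GAtom →o Set GAtom where
  toFun N := {a | ∃ r ∈ P, a ∈ r.head ∧ (∀ b, GLit.pos b ∈ r.body → b ∈ N) ∧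
    ∀ b, GLit.neg b ∈ r.body → b ∉ M}
  monotone' _ _ hNN' := fun _ ⟨r, hr, ha, hpos, hneg⟩ =>
    ⟨r, hr, ha, fun b hb => hNN' (hpos b hb), hneg⟩

def gelfondLifschitz (P : GProgram) (M : Set GAtom) : Set GAtom := (reductConseq P M).lfp

lemma map_gelfondLifschitz (M : Set GAtom) :
    reductConseq P M (gelfondLifschitz P M) = gelfondLifschitz P M :=
  OrderHom.map_lfp _

lemma gelfondLifschitz_subset_gAtoms (M : Set GAtom) : gelfondLifschitz P M ⊆ gAtoms P :=
  OrderHom.lfp_le _ fun _ ⟨r, hr, ha, _⟩ => ⟨r, hr, Or.inl ha⟩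

section Locality

variable {ρ : ℕ → ℕ} (hpos : ∀ p q, posEdgeG P p q → ρ p ≤ ρ q)
  (hneg : ∀ p q, negEdgeG P p q → ρ p < ρ q)
include hpos hneg

/-- Atoms of rank `> n` are thrown in to close `gelfondLifschitz P M'` under `reductConseq P M`. -/
lemma mem_gelfondLifschitz_of_eqBelow {n : ℕ} {M M' : Set GAtom}
    (h : EqBelow (fun a : GAtom => ρ a.pred) n M M') {a : GAtom}
    (ha : a ∈ gelfondLifschitz P M) (han : ρ a.pred ≤ n) : a ∈ gelfondLifschitz P M' := by
  have hclosed : reductConseq P M (gelfondLifschitz P M' ∪ {x | n < ρ x.pred}) ⊆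
      gelfondLifschitz P M' ∪ {x | n < ρ x.pred} := by
    rintro x ⟨r, hr, hx, hposb, hnegb⟩
    by_cases hxn : n < ρ x.pred
    · exact Or.inr hxn
    refine Or.inl ((map_gelfondLifschitz M').le ⟨r, hr, hx, fun b hb => ?_, fun b hb hbM' => ?_⟩)
    · have := hpos _ _ ⟨r, hr, ⟨b, hb, rfl⟩, x, hx, rfl⟩
      exact (hposb b hb).resolve_right (show ¬ n < ρ b.pred by omega)
    · have := hneg _ _ ⟨r, hr, ⟨b, hb, rfl⟩, x, hx, rfl⟩
      exact hnegb b hb ((h b (show ρ b.pred < n by omega)).mpr hbM')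
  exact (OrderHom.lfp_le _ hclosed ha).resolve_right (show ¬ n < ρ a.pred by omega)

lemma rankLocal_gelfondLifschitz :
    RankLocal (fun a : GAtom => ρ a.pred) (gelfondLifschitz P) :=
  fun _ _ _ h a (ha : ρ a.pred < _) =>
    ⟨fun haM => mem_gelfondLifschitz_of_eqBelow hpos hneg h haM (by omega),
      fun haM' => mem_gelfondLifschitz_of_eqBelow hpos hneg h.symm haM' (by omega)⟩

end Locality

def interpOf (B M : Set GAtom) : Set GLit
  | .pos a => a ∈ M
  | .neg a => a ∈ B ∧ a ∉ M

lemma plus_interpOf (B M : Set GAtom) : plus (interpOf B M) = M := rfl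

lemma isInterp_interpOf {B M : Set GAtom} (hM : M ⊆ B) : IsInterp B (interpOf B M) := by
  refine ⟨fun l hl => ?_, fun a haB => ?_⟩
  · cases l with
    | pos a => exact hM hl
    | neg a => exact hl.1
  · by_cases ha : a ∈ M
    · exact Or.inl ⟨ha, fun h => h.2 ha⟩
    · exact Or.inr ⟨⟨haB, ha⟩, ha⟩

lemma IsInterp.neg_mem_iff {B : Set GAtom} {I : Set GLit} (hI : IsInterp B I) {a : GAtom} :
    GLit.neg a ∈ I ↔ a ∈ B ∧ a ∉ plus I := by
  refine ⟨fun h => ⟨hI.1 _ h, fun hpos => ?_⟩, fun ⟨haB, hpos⟩ => ?_⟩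
  · rcases hI.2 a (hI.1 _ h) with ⟨-, hn⟩ | ⟨-, hp⟩
    exacts [hn h, hp hpos]
  · exact (hI.2 a haB).resolve_left (fun h => hpos h.1) |>.1

lemma IsInterp.eq_interpOf {B : Set GAtom} {I : Set GLit} (hI : IsInterp B I) :
    I = interpOf B (plus I) := by
  ext l
  cases l with
  | pos a => rfl
  | neg a => exact hI.neg_mem_iff

section Normal

variable (hnormal : ∀ r ∈ P, r.head.length = 1)
include hnormal

lemma isModelG_reductG_iff {I J : Set GLit} :
    IsModelG (reductG P I) J ↔ reductConseq P (plus I) (plus J) ⊆ plus J := by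
  constructor
  · rintro hJ a ⟨r, hr, ha, hposb, hnegb⟩
    obtain ⟨a', ha', hJa'⟩ := hJ ⟨r.head, r.body.filter GLit.isPos⟩ ⟨r, hr, hnegb, rfl⟩ <| by
      intro l hl
      obtain ⟨hl, hlpos⟩ := List.mem_filter.mp hl
      cases l with
      | pos b => exact hposb b hl
      | neg b => simp [GLit.isPos] at hlpos
    rwa [List.eq_of_mem_of_length_eq_one (hnormal r hr) ha ha']
  · rintro hT _ ⟨r, hr, hnegb, rfl⟩ hbody
    obtain ⟨a, ha⟩ := List.exists_mem_of_length_pos (hnormal r hr ▸ Nat.one_pos)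
    exact ⟨a, ha, hT ⟨r, hr, ha, fun b hb => hbody _ (List.mem_filter.mpr ⟨hb, rfl⟩), hnegb⟩⟩

lemma isModelG_iff {I : Set GLit} (hI : IsInterp (gAtoms P) I) :
    IsModelG P I ↔ reductConseq P (plus I) (plus I) ⊆ plus I := by
  constructor
  · rintro hmod a ⟨r, hr, ha, hposb, hnegb⟩
    obtain ⟨a', ha', hIa'⟩ := hmod r hr <| by
      intro l hl
      cases l with
      | pos b => exact hposb b hl
      | neg b => exact hI.neg_mem_iff.mpr ⟨⟨r, hr, Or.inr ⟨_, hl, rfl⟩⟩, hnegb b hl⟩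
    rwa [List.eq_of_mem_of_length_eq_one (hnormal r hr) ha ha']
  · intro hT r hr hbody
    obtain ⟨a, ha⟩ := List.exists_mem_of_length_pos (hnormal r hr ▸ Nat.one_pos)
    exact ⟨a, ha, hT ⟨r, hr, ha, fun b hb => hbody _ hb,
      fun b hb => (hI.neg_mem_iff.mp (hbody _ hb)).2⟩⟩

lemma isStableG_iff {I : Set GLit} :
    IsStableG P I ↔ IsInterp (gAtoms P) I ∧ IsFixedPt (gelfondLifschitz P) (plus I) := by
  constructor
  · rintro ⟨hI, hmod, hmin⟩
    have hle : gelfondLifschitz P (plus I) ⊆ plus I :=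
      OrderHom.lfp_le _ ((isModelG_iff hnormal hI).mp hmod)
    refine ⟨hI, hle.antisymm fun a ha => ?_⟩
    by_contra hna
    refine hmin ⟨interpOf (gAtoms P) (gelfondLifschitz P (plus I)),
      isInterp_interpOf (gelfondLifschitz_subset_gAtoms _), ?_, ?_⟩
    · rw [isModelG_reductG_iff hnormal, plus_interpOf]
      exact (map_gelfondLifschitz _).le
    · rw [plus_interpOf]
      exact (Set.ssubset_iff_of_subset hle).mpr ⟨a, ha, hna⟩
  · rintro ⟨hI, hfix⟩
    refine ⟨hI, (isModelG_iff hnormal hI).mpr ?_, ?_⟩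
    · have := map_gelfondLifschitz (P := P) (plus I)
      rw [hfix.eq] at this
      exact this.le
    · rintro ⟨J, -, hJ, hJI⟩
      have hle := OrderHom.lfp_le _ ((isModelG_reductG_iff hnormal).mp hJ)
      exact hJI.not_subset (hfix.eq ▸ hle)

end Normal

end ASP

/-- every ground normal ASP program without constraints
(every rule has exactly one head atom) that is stratified has exactly one
stable model. -/
theorem statement4 (P : GProgram) (hfin : P.Finite)
    (hnormal : ∀ r ∈ P, r.head.length = 1)
    (hstrat : StratifiedG P) :
    ∃! I, IsStableG P I := by
  obtain ⟨ρ, R, hρR, hρpos, hρneg⟩ := exists_rank_of_stratifiedG hfin hstrat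
  have hloc := rankLocal_gelfondLifschitz hρpos hρneg
  have hM := hloc.isFixedPt_iterate (fun a => hρR a.pred) ∅
  refine ⟨interpOf (gAtoms P) ((gelfondLifschitz P)^[R] ∅), (isStableG_iff hnormal).mpr
    ⟨isInterp_interpOf (hM.eq ▸ gelfondLifschitz_subset_gAtoms _), hM⟩, fun I hI => ?_⟩
  obtain ⟨hI, hIfix⟩ := (isStableG_iff hnormal).mp hI
  rw [hI.eq_interpOf, hloc.eq_of_isFixedPt hIfix hM]
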